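/- arXiv:1008.1113 — 3 statements merged into one kernel-verified Lean document; each statement's English description precedes it below -/
import Mathlib

section
/- Let n ≥ 2 and let p_1, …, p_{n+1} be integers with 2 ≤ p_1 ≤ ⋯ ≤ p_n ≤ p_{n+1}, and set q = p_1⋯p_n − (p_1 + ⋯ + p_n) + n. If p_{n+1} is a typical rank of format (p_1, …, p_{n+1}) over ℝ, then q ≤ p_{n+1} ≤ p_1⋯p_n. -/
open MeasureTheory

noncomputable section

/-- The rank-one tensor `a₁ ⊗ ⋯ ⊗ aₙ`. -/
def rankOneTensor {n : ℕ} (p : Fin n → ℕ) (a : ∀ i, Fin (p i) → ℝ) :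
    (∀ i, Fin (p i)) → ℝ :=
  fun k => ∏ i, a i (k i)

/-- The rank of a tensor: the least `r` such that `T` is a sum of `r` rank-one tensors. -/
def tensorRank {n : ℕ} (p : Fin n → ℕ) (T : (∀ i, Fin (p i)) → ℝ) : ℕ :=
  sInf {r | ∃ a : Fin r → ∀ i, Fin (p i) → ℝ, T = ∑ h, rankOneTensor p (a h)}

/-- `r` is a typical rank of format `p` over `ℝ`: the set of tensors of rank exactly `r`
has positive Lebesgue measure. -/
def IsTypicalRank {n : ℕ} (p : Fin n → ℕ) (r : ℕ) : Prop :=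
  0 < volume {T : (∀ i, Fin (p i)) → ℝ | tensorRank p T = r}
/-! A tensor of format `p₁ × ⋯ × p_{n+1}` is the sum of its `p₁⋯pₙ` slices `e_k ⊗ T(k, ·)`, so
its rank is at most `p₁⋯pₙ`. Conversely, a rank-one tensor can be rescaled so that each of its
first `n` factors has an entry equal to `1`; hence the tensors of rank `r` lie in finitely many
images of smooth maps from spaces of dimension `r (∑_{i ≤ n} (pᵢ - 1) + p_{n+1})`. For
`r = p_{n+1} < q` this is less than `p₁⋯p_{n+1}`, and a `C¹` image of a lower-dimensional space
has too small a Hausdorff dimension to carry Lebesgue measure. -/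

open Module Set

theorem MeasureTheory.volume_range_eq_zero_of_finrank_lt {E ι : Type*} [NormedAddCommGroup E]
    [NormedSpace ℝ E] [FiniteDimensional ℝ E] [Fintype ι] {f : E → ι → ℝ}
    (hf : ContDiff ℝ 1 f) (hE : finrank ℝ E < Fintype.card ι) :
    volume (range f) = 0 := by
  have h := hausdorffMeasure_of_dimH_lt (X := ι → ℝ) (d := Fintype.card ι)
    (hf.dimH_range_le.trans_lt (by norm_cast))
  rwa [NNReal.coe_natCast, hausdorffMeasure_pi_real] at h

lemma contDiff_rankOneTensor {n : ℕ} (p : Fin n → ℕ) : ContDiff ℝ ⊤ (rankOneTensor p) :=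
  contDiff_pi.2 fun k => contDiff_prod fun i _ =>
    (contDiff_apply ℝ ℝ (k i)).comp (contDiff_pi.1 contDiff_id i)

lemma exists_fin_eq_sum_rankOneTensor {n : ℕ} {p : Fin n → ℕ} {T : (∀ i, Fin (p i)) → ℝ}
    {S : Type*} [Fintype S] (a : S → ∀ i, Fin (p i) → ℝ)
    (hT : T = ∑ s, rankOneTensor p (a s)) :
    ∃ b : Fin (Fintype.card S) → ∀ i, Fin (p i) → ℝ, T = ∑ h, rankOneTensor p (b h) := by
  let e := Fintype.equivFin S
  refine ⟨a ∘ e.symm, ?_⟩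
  rw [hT, ← e.symm.sum_comp]
  simp only [Function.comp_apply]

def normalizedVector {ι : Type*} [DecidableEq ι] (j : ι) (w : {k // k ≠ j} → ℝ) : ι → ℝ :=
  fun k => if h : k = j then 1 else w ⟨k, h⟩

lemma normalizedVector_div_self {ι : Type*} [DecidableEq ι] {v : ι → ℝ} {j : ι} (hj : v j ≠ 0) :
    normalizedVector j (fun k => v k / v j) = (v j)⁻¹ • v := by
  funext k
  unfold normalizedVector
  split_ifs with h
  · subst h; simp [hj]
  · simp [div_eq_inv_mul]

lemma contDiff_normalizedVector {ι : Type*} [Fintype ι] [DecidableEq ι] (j : ι) :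
    ContDiff ℝ ⊤ (normalizedVector j) := by
  refine contDiff_pi.2 fun k => ?_
  unfold normalizedVector
  split_ifs with h
  · exact contDiff_const
  · exact contDiff_apply ℝ ℝ _

section LastAxis

variable {n : ℕ} (p : Fin (n + 1) → ℕ)

def sliceFactors (T : (∀ i, Fin (p i)) → ℝ)
    (k' : ∀ i : Fin n, Fin (p i.castSucc)) : ∀ i, Fin (p i) → ℝ :=
  Fin.snoc (α := fun i => Fin (p i) → ℝ) (fun i => Pi.single (k' i) 1)
    (fun x => T (Fin.snoc (α := fun i => Fin (p i)) k' x))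

lemma rankOneTensor_snoc (a : ∀ i : Fin n, Fin (p i.castSucc) → ℝ)
    (b : Fin (p (Fin.last n)) → ℝ) (k : ∀ i, Fin (p i)) :
    rankOneTensor p (Fin.snoc (α := fun i => Fin (p i) → ℝ) a b) k =
      (∏ i : Fin n, a i (k i.castSucc)) * b (k (Fin.last n)) := by
  simp [rankOneTensor, Fin.prod_univ_castSucc]

lemma sum_rankOneTensor_sliceFactors (T : (∀ i : Fin (n + 1), Fin (p i)) → ℝ) :
    ∑ k' : (∀ i : Fin n, Fin (p i.castSucc)), rankOneTensor p (sliceFactors p T k') = T := by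
  funext k
  rw [Finset.sum_apply, Fintype.sum_eq_single (fun i : Fin n => k i.castSucc)]
  · simp only [sliceFactors, rankOneTensor_snoc, Pi.single_eq_same, Finset.prod_const_one, one_mul]
    exact congrArg T (Fin.snoc_init_self k)
  · intro k' hk'
    obtain ⟨i, hi⟩ := Function.ne_iff.1 hk'
    rw [sliceFactors, rankOneTensor_snoc, Finset.prod_eq_zero (Finset.mem_univ i), zero_mul]
    simp [Ne.symm hi]

lemma tensorRank_le_prod_castSucc (T : (∀ i : Fin (n + 1), Fin (p i)) → ℝ) :
    tensorRank p T ≤ ∏ i : Fin n, p i.castSucc := by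
  obtain ⟨a, ha⟩ :=
    exists_fin_eq_sum_rankOneTensor _ (sum_rankOneTensor_sliceFactors p T).symm
  have h : tensorRank p T ≤ Fintype.card (∀ i : Fin n, Fin (p i.castSucc)) := Nat.sInf_le ⟨a, ha⟩
  simpa only [Fintype.card_pi, Fintype.card_fin] using h

lemma exists_eq_sum_rankOneTensor_tensorRank (T : (∀ i : Fin (n + 1), Fin (p i)) → ℝ) :
    ∃ a : Fin (tensorRank p T) → ∀ i, Fin (p i) → ℝ, T = ∑ h, rankOneTensor p (a h) :=
  Nat.sInf_mem (s := {r | ∃ a : Fin r → ∀ i, Fin (p i) → ℝ, T = ∑ h, rankOneTensor p (a h)})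
    ⟨_, exists_fin_eq_sum_rankOneTensor _ (sum_rankOneTensor_sliceFactors p T).symm⟩

def rankOneChart (j : ∀ i : Fin n, Fin (p i.castSucc))
    (x : (∀ i : Fin n, {k // k ≠ j i} → ℝ) × (Fin (p (Fin.last n)) → ℝ)) :
    (∀ i, Fin (p i)) → ℝ :=
  rankOneTensor p
    (Fin.snoc (α := fun i => Fin (p i) → ℝ) (fun i => normalizedVector (j i) (x.1 i)) x.2)

lemma contDiff_rankOneChart (j : ∀ i : Fin n, Fin (p i.castSucc)) :
    ContDiff ℝ ⊤ (rankOneChart p j) := by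
  refine (contDiff_rankOneTensor p).comp (contDiff_pi.2 fun i => ?_)
  induction i using Fin.lastCases with
  | last => simpa using contDiff_snd
  | cast i =>
    simp only [Fin.snoc_castSucc]
    exact (contDiff_normalizedVector (j i)).comp ((contDiff_pi.1 contDiff_id i).comp contDiff_fst)

lemma finrank_rankOneChart_domain (j : ∀ i : Fin n, Fin (p i.castSucc)) :
    finrank ℝ ((∀ i : Fin n, {k // k ≠ j i} → ℝ) × (Fin (p (Fin.last n)) → ℝ)) =
      ∑ i : Fin n, (p i.castSucc - 1) + p (Fin.last n) := by
  simp [finrank_prod, finrank_pi_fintype, Fintype.card_subtype_compl]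

lemma exists_rankOneChart_eq (hp : ∀ i : Fin n, p i.castSucc ≠ 0)
    (a : ∀ i, Fin (p i) → ℝ) : ∃ j x, rankOneChart p j x = rankOneTensor p a := by
  by_cases ha : ∀ i : Fin n, a i.castSucc ≠ 0
  · choose j hj using fun i => Function.ne_iff.1 (ha i)
    refine ⟨j, (fun i k => a i.castSucc k / a i.castSucc (j i),
      (∏ i, a i.castSucc (j i)) • a (Fin.last n)), ?_⟩
    funext k
    have hne : ∏ i, a i.castSucc (j i) ≠ 0 := Finset.prod_ne_zero_iff.2 fun i _ => hj i
    rw [rankOneChart, rankOneTensor_snoc, rankOneTensor, Fin.prod_univ_castSucc]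
    simp only [normalizedVector_div_self (hj _), Pi.smul_apply, smul_eq_mul,
      Finset.prod_mul_distrib, Finset.prod_inv_distrib]
    field_simp
  · simp only [not_forall, not_not] at ha
    obtain ⟨i₀, hi₀⟩ := ha
    refine ⟨fun i => ⟨0, Nat.pos_of_ne_zero (hp i)⟩, 0, ?_⟩
    funext k
    simp [rankOneChart, rankOneTensor, Fin.prod_univ_castSucc,
      Finset.prod_eq_zero (Finset.mem_univ i₀), hi₀]

lemma volume_setOf_tensorRank_eq_eq_zero {r : ℕ}
    (hr : r * (∑ i : Fin n, (p i.castSucc - 1) + p (Fin.last n)) < ∏ i, p i) :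
    volume {T : (∀ i : Fin (n + 1), Fin (p i)) → ℝ | tensorRank p T = r} = 0 := by
  have hp : ∀ i : Fin n, p i.castSucc ≠ 0 := fun i hi => by
    rw [Finset.prod_eq_zero (Finset.mem_univ i.castSucc) hi] at hr
    exact Nat.not_lt_zero _ hr
  choose j x hx using exists_rankOneChart_eq p hp
  let sumChart (c : Fin r → ∀ i : Fin n, Fin (p i.castSucc))
      (y : ∀ h, (∀ i : Fin n, {k // k ≠ c h i} → ℝ) × (Fin (p (Fin.last n)) → ℝ)) :
      (∀ i, Fin (p i)) → ℝ :=
    ∑ h, rankOneChart p (c h) (y h)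
  refine measure_mono_null (t := ⋃ c, range (sumChart c)) ?_ (measure_iUnion_null fun c => ?_)
  · rintro T (hT : tensorRank p T = r)
    obtain ⟨a, rfl⟩ : ∃ a : Fin r → ∀ i, Fin (p i) → ℝ, T = ∑ h, rankOneTensor p (a h) :=
      hT ▸ exists_eq_sum_rankOneTensor_tensorRank p T
    exact mem_iUnion.2 ⟨fun h => j (a h), fun h => x (a h), by simp [sumChart, hx]⟩
  · apply volume_range_eq_zero_of_finrank_lt
    · exact ContDiff.sum fun h _ =>
        ((contDiff_rankOneChart p (c h)).comp (contDiff_pi.1 contDiff_id h)).of_le le_top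
    · simpa [finrank_pi_fintype, finrank_rankOneChart_domain, Fintype.card_pi] using hr

end LastAxis

theorem typical_last_dim_implies_perfect_range_general
    {n : ℕ} (p : Fin (n + 1) → ℕ)
    (hp2 : 2 ≤ p 0) (hmono : Monotone p)
    (ht : IsTypicalRank p (p (Fin.last n))) :
    (∏ i : Fin n, (p i.castSucc : ℤ)) - (∑ i : Fin n, (p i.castSucc : ℤ)) + n
        ≤ (p (Fin.last n) : ℤ) ∧
      (p (Fin.last n) : ℤ) ≤ ∏ i : Fin n, (p i.castSucc : ℤ) := by
  have hp : ∀ i, 1 ≤ p i := fun i => one_le_two.trans (hp2.trans (hmono (Fin.zero_le i)))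
  obtain ⟨T, hT⟩ := nonempty_of_measure_ne_zero ht.ne'
  have hub : p (Fin.last n) ≤ ∏ i : Fin n, p i.castSucc := hT ▸ tensorRank_le_prod_castSucc p T
  refine ⟨?_, mod_cast hub⟩
  by_contra! hlt
  have hdim : p (Fin.last n) * (∑ i : Fin n, (p i.castSucc - 1) + p (Fin.last n)) < ∏ i, p i := by
    rw [Fin.prod_univ_castSucc, mul_comm]
    refine Nat.mul_lt_mul_of_pos_right ?_ (hp _)
    zify [hp]
    push_cast [Finset.sum_sub_distrib]
    simp only [Finset.sum_const, Finset.card_univ, Fintype.card_fin, nsmul_eq_mul, mul_one]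
    linarith
  exact ht.ne' (volume_setOf_tensorRank_eq_eq_zero p hdim)

/-- If `p_{n+1}` is a typical rank of format `(p₁,…,p_{n+1})` over `ℝ`, where
`2 ≤ p₁ ≤ ⋯ ≤ pₙ ≤ p_{n+1}`, then `q ≤ p_{n+1} ≤ p₁⋯pₙ` where
`q = p₁⋯pₙ − (p₁+⋯+pₙ) + n`. -/
theorem typical_last_dim_implies_perfect_range
    {n : ℕ} (hn : 2 ≤ n) (p : Fin (n + 1) → ℕ)
    (hp2 : 2 ≤ p 0) (hmono : Monotone p)
    (ht : IsTypicalRank p (p (Fin.last n))) :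
    (∏ i : Fin n, (p i.castSucc : ℤ)) - (∑ i : Fin n, (p i.castSucc : ℤ)) + n
        ≤ (p (Fin.last n) : ℤ) ∧
      (p (Fin.last n) : ℤ) ≤ ∏ i : Fin n, (p i.castSucc : ℤ) :=
  typical_last_dim_implies_perfect_range_general p hp2 hmono ht

end
end

section
/- Let n ≥ 1 and let p_1, …, p_{n+1} be integers with 2 ≤ p_1 ≤ p_2 ≤ ⋯ ≤ p_{n+1} ≤ p_1⋯p_n. Then every typical rank r of format (p_1, …, p_{n+1}) over ℝ satisfies p_{n+1} ≤ r ≤ p_1⋯p_n. -/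
open MeasureTheory

noncomputable section

/-- If `2 ≤ p₁ ≤ ⋯ ≤ p_{n+1} ≤ p₁⋯pₙ`, then every typical rank `r` of format
`(p₁,…,p_{n+1})` over `ℝ` satisfies `p_{n+1} ≤ r ≤ p₁⋯pₙ`. -/
lemma volume_det_null (m : ℕ) :
    volume {g : Fin m × Fin m → ℝ | (Matrix.of fun j k => g (j, k)).det = 0} = 0 := by
  classical
  set Z : Set (Fin m × Fin m → ℝ) :=
    {g | (Matrix.of fun j k => g (j, k)).det = 0} with hZdef
  have hcont0 : Continuous fun g : Fin m × Fin m → ℝ => (Matrix.of fun j k => g (j, k)) := by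
    apply continuous_matrix
    intro j k
    exact continuous_apply (j, k)
  set I1 : Fin m × Fin m → ℝ := fun q => if q.1 = q.2 then 1 else 0 with hI1
  have hof : ∀ (g : Fin m × Fin m → ℝ) (t : ℝ),
      (Matrix.of fun j k => (g + t • I1) (j, k)) = (Matrix.of fun j k => g (j, k)) + t • 1 := by
    intro g t
    ext j k
    simp [Matrix.one_apply, I1, mul_ite]
  set A : Set (ℝ × (Fin m × Fin m → ℝ)) :=
    {q | ((Matrix.of fun j k => q.2 (j, k)) + q.1 • (1 : Matrix (Fin m) (Fin m) ℝ)).det = 0}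
    with hAdef
  have hdetc : Continuous fun q : ℝ × (Fin m × Fin m → ℝ) =>
      ((Matrix.of fun j k => q.2 (j, k)) + q.1 • (1 : Matrix (Fin m) (Fin m) ℝ)).det := by
    apply Continuous.matrix_det
    exact (hcont0.comp continuous_snd).add (continuous_fst.smul continuous_const)
  have hA : MeasurableSet A := (isClosed_eq hdetc continuous_const).measurableSet
  -- each t-section over M is the preimage of Z under translation, hence has measure volume Z
  have slice1 : ∀ t : ℝ, volume (Prod.mk t ⁻¹' A) = volume Z := by
    intro t
    have he : Prod.mk t ⁻¹' A = (fun g => g + t • I1) ⁻¹' Z := by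
      ext g
      simp only [Set.mem_preimage, hAdef, Set.mem_setOf_eq, hZdef, hof]
    rw [he, measure_preimage_add_right]
  -- each M-section over t is finite (roots of a monic polynomial), hence null
  have slice2 : ∀ g : Fin m × Fin m → ℝ, volume {t : ℝ | (t, g) ∈ A} = 0 := by
    intro g
    set N : Matrix (Fin m) (Fin m) ℝ := Matrix.of fun j k => g (j, k) with hN
    have hsub : {t : ℝ | (t, g) ∈ A} ⊆ {t : ℝ | ((-N).charpoly).eval t = 0} := by
      intro t ht
      have h1 : ((-N).charpoly).eval t = (N + t • 1).det := by
        rw [Matrix.charpoly]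
        rw [show ((Matrix.charmatrix (-N)).det).eval t
            = ((Matrix.charmatrix (-N)).map (Polynomial.evalRingHom t)).det from
          (RingHom.map_det (Polynomial.evalRingHom t) (Matrix.charmatrix (-N)))]
        congr 1
        ext j k
        by_cases h : j = k
        · subst h
          simp [Matrix.charmatrix_apply_eq, Matrix.one_apply, add_comm]
        · simp [Matrix.charmatrix_apply_ne _ _ _ h, Matrix.one_apply_ne h]
      simp only [Set.mem_setOf_eq, hAdef, hN] at ht ⊢
      rw [h1]
      exact ht
    refine measure_mono_null hsub ?_
    apply Set.Finite.measure_zero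
    exact Polynomial.finite_setOf_isRoot (Matrix.charpoly_monic (-N)).ne_zero
  -- Fubini both ways
  have h1 : (volume : Measure (ℝ × (Fin m × Fin m → ℝ))) A = volume Z * volume (Set.univ : Set ℝ) := by
    rw [Measure.volume_eq_prod, Measure.prod_apply hA]
    simp_rw [slice1]
    simp [lintegral_const, mul_comm]
  have h2 : (volume : Measure (ℝ × (Fin m × Fin m → ℝ))) A = 0 := by
    rw [Measure.volume_eq_prod, Measure.prod_apply_symm hA]
    have : ∀ g : Fin m × Fin m → ℝ, volume ((fun t => (t, g)) ⁻¹' A) = 0 := by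
      intro g
      exact slice2 g
    simp_rw [this]
    simp
  rw [h2] at h1
  rcases (mul_eq_zero.mp h1.symm) with h | h
  · exact h
  · simp [Real.volume_univ] at h


lemma volume_det_pullback_null {ι : Type*} [Fintype ι] {m : ℕ}
    (κ : Fin m × Fin m → ι) (hκ : Function.Injective κ) :
    volume {T : ι → ℝ | (Matrix.of fun j k => T (κ (j, k))).det = 0} = 0 := by
  classical
  set s : Set ι := Set.range κ with hs
  set e2 : Fin m × Fin m ≃ s := Equiv.ofInjective κ hκ with he2
  set Z1 : Set ({x // x ∈ s} → ℝ) :=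
    {h | (Matrix.of fun j k => h (e2 (j, k))).det = 0} with hZ1
  have hZ1m : MeasurableSet Z1 := by
    have : Continuous fun h : {x // x ∈ s} → ℝ =>
        (Matrix.of fun j k => h (e2 (j, k))).det := by
      apply Continuous.matrix_det
      apply continuous_matrix
      intro j k
      exact continuous_apply (e2 (j, k))
    exact (isClosed_eq this continuous_const).measurableSet
  have hZ1null : volume Z1 = 0 := by
    have hmp := volume_measurePreserving_piCongrLeft (fun _ : {x // x ∈ s} => ℝ) e2
    have hpre : (MeasurableEquiv.piCongrLeft (fun _ : {x // x ∈ s} => ℝ) e2) ⁻¹' Z1 =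
        {g : Fin m × Fin m → ℝ | (Matrix.of fun j k => g (j, k)).det = 0} := by
      ext g
      simp only [Set.mem_preimage, hZ1, Set.mem_setOf_eq,
        MeasurableEquiv.coe_piCongrLeft]
      congr! 3
      exact funext fun j => funext fun k =>
        Equiv.piCongrLeft_apply_apply (fun _ => ℝ) e2 g (j, k)
    have := hmp.measure_preimage hZ1m.nullMeasurableSet
    rw [hpre] at this
    rw [← this, volume_det_null]
  have hmp2 := volume_preserving_piEquivPiSubtypeProd (fun _ : ι => ℝ) (· ∈ s)
  have hset : {T : ι → ℝ | (Matrix.of fun j k => T (κ (j, k))).det = 0} =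
      (MeasurableEquiv.piEquivPiSubtypeProd (fun _ : ι => ℝ) (· ∈ s)) ⁻¹' (Z1 ×ˢ Set.univ) := by
    ext T
    simp only [Set.mem_preimage, Set.mem_prod, Set.mem_univ, and_true, hZ1,
      Set.mem_setOf_eq, MeasurableEquiv.piEquivPiSubtypeProd,
      Equiv.piEquivPiSubtypeProd]
    exact ⟨fun h => h, fun h => h⟩
  rw [hset, hmp2.measure_preimage ((hZ1m.prod MeasurableSet.univ).nullMeasurableSet),
    Measure.volume_eq_prod, Measure.prod_prod]
  refine mul_eq_zero_of_left ?_ _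
  convert hZ1null using 2
  congr!


lemma exists_decomposition {n : ℕ} (p : Fin (n + 1) → ℕ) (T : (∀ i, Fin (p i)) → ℝ) :
    ∃ a : Fin (∏ i : Fin n, p i.castSucc) → ∀ i, Fin (p i) → ℝ,
      T = ∑ h, rankOneTensor p (a h) := by
  classical
  have hcard : Fintype.card (∀ i : Fin n, Fin (p i.castSucc)) = ∏ i : Fin n, p i.castSucc := by
    simp
  let ee : Fin (∏ i : Fin n, p i.castSucc) ≃ (∀ i : Fin n, Fin (p i.castSucc)) :=
    (Fintype.equivFinOfCardEq hcard).symm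
  set A : (∀ i : Fin n, Fin (p i.castSucc)) → ∀ i, Fin (p i) → ℝ :=
    fun k' => Fin.lastCases (motive := fun i => Fin (p i) → ℝ)
      (fun j => T (Fin.snoc k' j)) (fun i x => if x = k' i then 1 else 0) with hA
  refine ⟨fun h => A (ee h), ?_⟩
  funext x
  have key : ∀ k' : ∀ i : Fin n, Fin (p i.castSucc),
      rankOneTensor p (A k') x
        = (if Fin.init x = k' then 1 else 0) * T (Fin.snoc k' (x (Fin.last n))) := by
    intro k'
    unfold rankOneTensor
    rw [Fin.prod_univ_castSucc]
    have hlast : A k' (Fin.last n) = fun j => T (Fin.snoc k' j) := by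
      simp [hA]
    have hcs : ∀ i : Fin n, A k' i.castSucc = fun x => if x = k' i then 1 else 0 := by
      intro i; simp [hA]
    rw [hlast]
    have hprod : (∏ i : Fin n, A k' i.castSucc (x i.castSucc))
        = if Fin.init x = k' then 1 else 0 := by
      by_cases h : Fin.init x = k'
      · rw [if_pos h]
        apply Finset.prod_eq_one
        intro i _
        rw [hcs i]
        have : x i.castSucc = k' i := by rw [← h]; rfl
        simp [this]
      · rw [if_neg h]
        obtain ⟨i, hi⟩ := Function.ne_iff.mp h
        apply Finset.prod_eq_zero (Finset.mem_univ i)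
        rw [hcs i]
        exact if_neg hi
    rw [hprod]
  have hsum := Fintype.sum_equiv ee
    (fun h => rankOneTensor p (A (ee h)) x)
    (fun k' => (if Fin.init x = k' then 1 else 0) * T (Fin.snoc k' (x (Fin.last n))))
    (fun h => key (ee h))
  rw [Finset.sum_apply]
  rw [hsum]
  simp [ite_mul, Fin.snoc_init_self]


/-- main -/
theorem typical_rank_between_last_dim_and_product
    {n : ℕ} (hn : 1 ≤ n) (p : Fin (n + 1) → ℕ)
    (hp2 : 2 ≤ p 0) (hmono : Monotone p)
    (hub : p (Fin.last n) ≤ ∏ i : Fin n, p i.castSucc)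
    (r : ℕ) (hr : IsTypicalRank p r) :
    p (Fin.last n) ≤ r ∧ r ≤ ∏ i : Fin n, p i.castSucc := by
  classical
  set m := p (Fin.last n) with hm
  set N := ∏ i : Fin n, p i.castSucc with hN
  have upper : ∀ T : (∀ i, Fin (p i)) → ℝ, tensorRank p T ≤ N := by
    intro T
    obtain ⟨a, ha⟩ := exists_decomposition p T
    exact Nat.sInf_le ⟨a, ha⟩
  have hle : r ≤ N := by
    by_contra hlt
    push_neg at hlt
    have hemp : {T : (∀ i, Fin (p i)) → ℝ | tensorRank p T = r} = ∅ := by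
      ext T
      simp only [Set.mem_setOf_eq, Set.mem_empty_iff_false, iff_false]
      intro hT
      exact absurd (hT ▸ upper T) (not_le.mpr hlt)
    rw [IsTypicalRank, hemp] at hr
    simp at hr
  refine ⟨?_, hle⟩
  by_contra hlt
  push_neg at hlt
  obtain ⟨u⟩ : Nonempty (Fin m ↪ (∀ i : Fin n, Fin (p i.castSucc))) := by
    apply Function.Embedding.nonempty_of_card_le
    simpa using hub
  set κ : Fin m × Fin m → (∀ i, Fin (p i)) := fun q => Fin.snoc (u q.2) q.1 with hκdef
  have hκ : Function.Injective κ := by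
    rintro ⟨j, k⟩ ⟨j', k'⟩ h
    have h1 : j = j' := by
      have := congrFun h (Fin.last n)
      simpa [κ, Fin.snoc_last] using this
    have h2 : k = k' := by
      apply u.injective
      funext i
      have := congrFun h i.castSucc
      simpa [κ, Fin.snoc_castSucc] using this
    simp [h1, h2]
  have hsub : {T : (∀ i, Fin (p i)) → ℝ | tensorRank p T = r} ⊆
      {T | (Matrix.of fun j k => T (κ (j, k))).det = 0} := by
    intro T hT
    simp only [Set.mem_setOf_eq] at hT ⊢
    have hne : {s | ∃ a : Fin s → ∀ i, Fin (p i) → ℝ,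
        T = ∑ h, rankOneTensor p (a h)}.Nonempty :=
      ⟨N, exists_decomposition p T⟩
    have hmem := Nat.sInf_mem hne
    rw [show sInf {s | ∃ a : Fin s → ∀ i, Fin (p i) → ℝ,
        T = ∑ h, rankOneTensor p (a h)} = tensorRank p T from rfl, hT] at hmem
    obtain ⟨a, ha⟩ := hmem
    set uvec : Fin m → (Fin r → ℝ) := fun j h => a h (Fin.last n) j with huvec
    have hnli : ¬ LinearIndependent ℝ uvec := by
      intro hli
      have hcard := hli.fintype_card_le_finrank
      rw [Module.finrank_pi] at hcard
      simp at hcard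
      omega
    obtain ⟨c, hc0, i0, hi0⟩ := Fintype.not_linearIndependent_iff.mp hnli
    apply Matrix.exists_vecMul_eq_zero_iff.mp
    refine ⟨c, fun hc => hi0 (congrFun hc i0), ?_⟩
    funext k
    have hTval : ∀ j : Fin m, T (Fin.snoc (u k) j)
        = ∑ h : Fin r, (∏ i : Fin n, a h i.castSucc (u k i)) * a h (Fin.last n) j := by
      intro j
      rw [congrFun ha (Fin.snoc (u k) j), Finset.sum_apply]
      apply Finset.sum_congr rfl
      intro h _
      unfold rankOneTensor
      rw [Fin.prod_univ_castSucc]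
      congr 1
      · apply Finset.prod_congr rfl
        intro i _
        rw [Fin.snoc_castSucc]
      · rw [Fin.snoc_last]
    have hinner : ∀ h : Fin r, ∑ j : Fin m, c j * a h (Fin.last n) j = 0 := by
      intro h
      have := congrFun hc0 h
      simpa [huvec, Finset.sum_apply] using this
    have hvm : ∀ k' : Fin m, Matrix.vecMul c (Matrix.of fun j k => T (κ (j, k))) k'
        = ∑ j : Fin m, c j * T (Fin.snoc (u k') j) := by
      intro k'
      simp [Matrix.vecMul, dotProduct, hκdef]
    rw [hvm k]
    calc ∑ j : Fin m, c j * T (Fin.snoc (u k) j)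
        = ∑ j : Fin m, ∑ h : Fin r,
            (∏ i : Fin n, a h i.castSucc (u k i)) * (c j * a h (Fin.last n) j) := by
          apply Finset.sum_congr rfl
          intro j _
          rw [hTval j, Finset.mul_sum]
          apply Finset.sum_congr rfl
          intro h _
          ring
      _ = ∑ h : Fin r, (∏ i : Fin n, a h i.castSucc (u k i))
            * ∑ j : Fin m, c j * a h (Fin.last n) j := by
          rw [Finset.sum_comm]
          apply Finset.sum_congr rfl
          intro h _
          rw [Finset.mul_sum]
      _ = 0 := by
          apply Finset.sum_eq_zero
          intro h _
          rw [hinner h, mul_zero]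
  have h0 := measure_mono_null hsub (volume_det_pullback_null κ hκ)
  rw [IsTypicalRank, h0] at hr
  exact lt_irrefl _ hr


end
end

section
/- Let n ≥ 2 and let p_1, …, p_n be integers with p_j ≥ 2. Let x assign a real number x(k_1,…,k_n) to every index tuple with 1 ≤ k_j ≤ p_j, and let g be the associated linear functional on the space of format p_1 × ⋯ × p_n tensors, i.e., g(v) = Σ_{k_1,…,k_n} x(k_1,…,k_n)·v(k_1,…,k_n). Suppose that g((e_{k_1}+e_{p_1}) ⊗ (e_{k_2}+e_{p_2}) ⊗ ⋯ ⊗ (e_{k_n}+e_{p_n})) = 0 for every (k_1,…,k_n) ∈ S_0 with (k_1,…,k_n) ≠ (p_1,…,p_n). Then for every tuple (k_1,…,k_n) with 1 ≤ k_j ≤ p_j − 1 for each j, one has x(k_1,k_2,…,k_n) = (−1)^{n−1}·( x(k_1,p_2,p_3,…,p_n) + x(p_1,k_2,p_3,…,p_n) + ⋯ + x(p_1,p_2,…,p_{n−1},k_n) + (n−1)·x(p_1,p_2,…,p_n) ). -/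
noncomputable section

open Finset

/-- The largest index (corresponding to the `p_j`-th coordinate, 1-based) of `Fin m`. -/
def lastIdx {m : ℕ} (h : 2 ≤ m) : Fin m := ⟨m - 1, by omega⟩

private lemma alt_sum_powerset {α : Type*} [DecidableEq α] (s : Finset α) :
    ∑ E ∈ s.powerset, (-1 : ℝ) ^ E.card = if s = ∅ then 1 else 0 := by
  have h := Finset.sum_powerset_neg_one_pow_card (x := s)
  have : ((∑ m ∈ s.powerset, (-1 : ℤ) ^ m.card : ℤ) : ℝ)
      = ∑ E ∈ s.powerset, (-1 : ℝ) ^ E.card := by push_cast; rfl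
  rw [← this, h]
  split_ifs <;> simp

/-- Möbius inversion on the powerset lattice. -/
private lemma mobius_aux {α : Type*} [DecidableEq α] (y : Finset α → ℝ) (A : Finset α) :
    ∑ B ∈ A.powerset, (-1 : ℝ) ^ (A.card - B.card) * (∑ C ∈ B.powerset, y C) = y A := by
  have swap : ∑ B ∈ A.powerset, ∑ C ∈ B.powerset, (-1 : ℝ) ^ (A.card - B.card) * y C
      = ∑ C ∈ A.powerset, ∑ B ∈ A.powerset.filter (fun B => C ⊆ B),
          (-1 : ℝ) ^ (A.card - B.card) * y C := by
    refine Finset.sum_comm' ?_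
    intro B C
    simp only [mem_powerset, mem_filter]
    exact ⟨fun ⟨h1, h2⟩ => ⟨⟨h1, h2⟩, h2.trans h1⟩, fun ⟨⟨h1, h2⟩, _⟩ => ⟨h1, h2⟩⟩
  calc ∑ B ∈ A.powerset, (-1 : ℝ) ^ (A.card - B.card) * (∑ C ∈ B.powerset, y C)
      = ∑ B ∈ A.powerset, ∑ C ∈ B.powerset, (-1 : ℝ) ^ (A.card - B.card) * y C := by
        simp_rw [Finset.mul_sum]
    _ = ∑ C ∈ A.powerset, (∑ B ∈ A.powerset.filter (fun B => C ⊆ B),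
          (-1 : ℝ) ^ (A.card - B.card)) * y C := by
        rw [swap]; simp_rw [Finset.sum_mul]
    _ = y A := by
        rw [Finset.sum_eq_single A]
        · have hA : A ∈ A.powerset.filter (fun B => A ⊆ B) := by simp
          rw [Finset.sum_eq_single A]
          · simp
          · intro B hB hBA
            simp only [mem_filter, mem_powerset] at hB
            exact absurd (subset_antisymm hB.1 hB.2) hBA
          · intro h; exact absurd hA h
        · intro C hC hCA
          rw [mem_powerset] at hC
          have : ∑ B ∈ A.powerset.filter (fun B => C ⊆ B),
              (-1 : ℝ) ^ (A.card - B.card) = 0 := by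
            have := alt_sum_powerset (A \ C)
            rw [if_neg (by
              intro h
              exact hCA (subset_antisymm hC (sdiff_eq_empty_iff_subset.mp h)))] at this
            rw [← this]
            refine Finset.sum_nbij' (fun B => A \ B) (fun E => A \ E) ?_ ?_ ?_ ?_ ?_
            · intro B hB
              simp only [mem_filter, mem_powerset] at hB ⊢
              exact sdiff_subset_sdiff le_rfl hB.2
            · intro E hE
              simp only [mem_powerset, mem_filter] at hE ⊢
              refine ⟨sdiff_subset, fun a ha => ?_⟩
              simp only [mem_sdiff]
              refine ⟨hC ha, fun haE => ?_⟩
              have := hE haE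
              simp only [mem_sdiff] at this
              exact this.2 ha
            · intro B hB
              simp only [mem_filter, mem_powerset] at hB
              exact Finset.sdiff_sdiff_eq_self hB.1
            · intro E hE
              simp only [mem_powerset] at hE
              exact Finset.sdiff_sdiff_eq_self (hE.trans sdiff_subset)
            · intro B hB
              simp only [mem_filter, mem_powerset] at hB
              rw [Finset.card_sdiff_of_subset hB.1]
          rw [this, zero_mul]
        · intro h; exact absurd (Finset.mem_powerset_self A) h

/-- Counting fibers of `T ↦ T ∩ A`. -/
private lemma sum_inter_eq {α : Type*} [Fintype α] [DecidableEq α] (A : Finset α)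
    (f : Finset α → ℝ) :
    ∑ T : Finset α, f (T ∩ A) = 2 ^ (Fintype.card α - A.card) * ∑ B ∈ A.powerset, f B := by
  have : ∑ T : Finset α, f (T ∩ A)
      = ∑ q ∈ A.powerset ×ˢ Aᶜ.powerset, f q.1 := by
    refine Finset.sum_nbij' (fun T => (T ∩ A, T \ A)) (fun q => q.1 ∪ q.2) ?_ ?_ ?_ ?_ ?_
    · intro T _
      simp only [Finset.mem_product, mem_powerset]
      constructor
      · exact inter_subset_right
      · intro a ha; simp only [mem_sdiff] at ha; simp [ha.2]
    · intro q _; exact mem_univ _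
    · intro T _
      ext a; simp only [mem_union, mem_inter, mem_sdiff]; tauto
    · intro q hq
      simp only [Finset.mem_product, mem_powerset] at hq
      obtain ⟨h1, h2⟩ := hq
      have h2' : ∀ a ∈ q.2, a ∉ A := by
        intro a ha; have := h2 ha; simpa using this
      ext a
      · simp only [mem_inter, mem_union]
        constructor
        · rintro ⟨h | h, hA⟩
          · exact h
          · exact absurd hA (h2' a h)
        · intro h; exact ⟨Or.inl h, h1 h⟩
      · simp only [mem_sdiff, mem_union]
        constructor
        · rintro ⟨h | h, hA⟩
          · exact absurd (h1 h) hA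
          · exact h
        · intro h; exact ⟨Or.inr h, h2' a h⟩
    · intro T _; rfl
  rw [this, Finset.sum_product]
  rw [Finset.sum_comm]
  simp only [Finset.sum_const, card_powerset, Finset.card_compl, nsmul_eq_mul]
  push_cast
  ring_nf

/-- Main theorem. -/
theorem g_vanishing_implies_relation
    {n : ℕ} (hn : 2 ≤ n) (p : Fin n → ℕ) (hp : ∀ i, 2 ≤ p i)
    (x : (∀ i, Fin (p i)) → ℝ)
    (hx : ∀ k : ∀ i, Fin (p i),
      (Finset.univ.filter fun j => k j = lastIdx (hp j)).card ≠ n - 1 →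
      k ≠ (fun i => lastIdx (hp i)) →
      ∑ t : ∀ i, Fin (p i), x t *
        ∏ i, ((Pi.single (k i) (1 : ℝ) : Fin (p i) → ℝ) (t i)
          + (Pi.single (lastIdx (hp i)) (1 : ℝ) : Fin (p i) → ℝ) (t i)) = 0)
    (k : ∀ i, Fin (p i)) (hk : ∀ j, k j ≠ lastIdx (hp j)) :
    x k = (-1 : ℝ) ^ (n - 1) *
      ((∑ j, x (Function.update (fun i => lastIdx (hp i)) j (k j)))
        + ((n : ℝ) - 1) * x (fun i => lastIdx (hp i))) := by
  classical
  set tB : Finset (Fin n) → ∀ i, Fin (p i) :=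
    fun B i => if i ∈ B then k i else lastIdx (hp i) with htB
  set y : Finset (Fin n) → ℝ := fun B => x (tB B) with hy
  have tBpos : ∀ (B : Finset (Fin n)) i, i ∈ B → tB B i = k i := fun B i hi => if_pos hi
  have tBneg : ∀ (B : Finset (Fin n)) i, i ∉ B → tB B i = lastIdx (hp i) :=
    fun B i hi => if_neg hi
  -- Step 1: the vanishing hypothesis in subset form
  have key : ∀ A : Finset (Fin n), 2 ≤ A.card → ∑ B ∈ A.powerset, y B = 0 := by
    intro A hA
    have hAn : A.card ≤ n := by
      simpa using Finset.card_le_card (Finset.subset_univ A)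
    have hcond1 : (Finset.univ.filter fun j => tB A j = lastIdx (hp j)).card ≠ n - 1 := by
      have hfe : (Finset.univ.filter fun j => tB A j = lastIdx (hp j)) = Aᶜ := by
        ext j
        simp only [Finset.mem_filter, Finset.mem_univ, true_and, Finset.mem_compl]
        by_cases hj : j ∈ A
        · rw [tBpos A j hj]
          exact ⟨fun h => absurd h (hk j), fun h => absurd hj h⟩
        · rw [tBneg A j hj]
          exact ⟨fun _ => hj, fun _ => rfl⟩
      rw [hfe, Finset.card_compl, Fintype.card_fin]
      omega
    have hcond2 : tB A ≠ (fun i => lastIdx (hp i)) := by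
      obtain ⟨j, hj⟩ : A.Nonempty := Finset.card_pos.mp (by omega)
      intro h
      have h2 : tB A j = lastIdx (hp j) := congrFun h j
      rw [tBpos A j hj] at h2
      exact hk j h2
    have h0 := hx (tB A) hcond1 hcond2
    -- evaluate the sum
    have inner : ∀ T : Finset (Fin n),
        (∑ t : ∀ i, Fin (p i), x t *
          ((∏ i ∈ T, (Pi.single (tB A i) (1 : ℝ) : Fin (p i) → ℝ) (t i)) *
            ∏ i ∈ Tᶜ, (Pi.single (lastIdx (hp i)) (1 : ℝ) : Fin (p i) → ℝ) (t i)))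
        = y (T ∩ A) := by
      intro T
      have eTA : ∀ i ∈ T, tB (T ∩ A) i = tB A i := by
        intro i hi
        by_cases hiA : i ∈ A
        · rw [tBpos (T ∩ A) i (Finset.mem_inter.mpr ⟨hi, hiA⟩), tBpos A i hiA]
        · rw [tBneg (T ∩ A) i (fun h => hiA (Finset.mem_inter.mp h).2), tBneg A i hiA]
      have eTc : ∀ i ∉ T, tB (T ∩ A) i = lastIdx (hp i) := by
        intro i hi
        exact tBneg (T ∩ A) i (fun h => hi (Finset.mem_inter.mp h).1)
      show _ = x (tB (T ∩ A))
      rw [Fintype.sum_eq_single (tB (T ∩ A))]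
      · have e1 : ∀ i ∈ T, (Pi.single (tB A i) (1 : ℝ) : Fin (p i) → ℝ) (tB (T ∩ A) i) = 1 := by
          intro i hi
          rw [eTA i hi, Pi.single_eq_same]
        have e2 : ∀ i ∈ Tᶜ,
            (Pi.single (lastIdx (hp i)) (1 : ℝ) : Fin (p i) → ℝ) (tB (T ∩ A) i) = 1 := by
          intro i hi
          rw [eTc i (Finset.mem_compl.mp hi), Pi.single_eq_same]
        rw [Finset.prod_eq_one e1, Finset.prod_eq_one e2]
        ring
      · intro t ht
        obtain ⟨i, hi⟩ : ∃ i, t i ≠ tB (T ∩ A) i := by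
          by_contra h; push_neg at h; exact ht (funext h)
        by_cases hiT : i ∈ T
        · have hz : (Pi.single (tB A i) (1 : ℝ) : Fin (p i) → ℝ) (t i) = 0 := by
            rw [Pi.single_apply, if_neg (fun h => hi (h.trans (eTA i hiT).symm))]
          rw [Finset.prod_eq_zero hiT hz]; ring
        · have hz : (Pi.single (lastIdx (hp i)) (1 : ℝ) : Fin (p i) → ℝ) (t i) = 0 := by
            rw [Pi.single_apply, if_neg (fun h => hi (h.trans (eTc i hiT).symm))]
          rw [Finset.prod_eq_zero (Finset.mem_compl.mpr hiT) hz]; ring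
    have hsum : (∑ t : ∀ i, Fin (p i), x t *
        ∏ i, ((Pi.single (tB A i) (1 : ℝ) : Fin (p i) → ℝ) (t i)
          + (Pi.single (lastIdx (hp i)) (1 : ℝ) : Fin (p i) → ℝ) (t i)))
        = ∑ T : Finset (Fin n), y (T ∩ A) := by
      calc ∑ t : ∀ i, Fin (p i), x t *
          ∏ i, ((Pi.single (tB A i) (1 : ℝ) : Fin (p i) → ℝ) (t i)
            + (Pi.single (lastIdx (hp i)) (1 : ℝ) : Fin (p i) → ℝ) (t i))
          = ∑ t : ∀ i, Fin (p i), ∑ T : Finset (Fin n), x t *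
              ((∏ i ∈ T, (Pi.single (tB A i) (1 : ℝ) : Fin (p i) → ℝ) (t i)) *
                ∏ i ∈ Tᶜ, (Pi.single (lastIdx (hp i)) (1 : ℝ) : Fin (p i) → ℝ) (t i)) := by
            refine Finset.sum_congr rfl fun t _ => ?_
            rw [Fintype.prod_add, Finset.mul_sum]
        _ = ∑ T : Finset (Fin n), ∑ t : ∀ i, Fin (p i), x t *
              ((∏ i ∈ T, (Pi.single (tB A i) (1 : ℝ) : Fin (p i) → ℝ) (t i)) *
                ∏ i ∈ Tᶜ, (Pi.single (lastIdx (hp i)) (1 : ℝ) : Fin (p i) → ℝ) (t i)) :=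
            Finset.sum_comm
        _ = ∑ T : Finset (Fin n), y (T ∩ A) := Finset.sum_congr rfl fun T _ => inner T
    rw [hsum, sum_inter_eq A y, Fintype.card_fin] at h0
    have h2 : (0 : ℝ) < 2 ^ (n - A.card) := by positivity
    exact (mul_eq_zero.mp h0).resolve_left (ne_of_gt h2)
  -- Step 2: Möbius inversion at univ
  have hm := mobius_aux y Finset.univ
  have hyuniv : y Finset.univ = x k := by
    show x (tB Finset.univ) = x k
    congr 1
    funext i
    exact tBpos Finset.univ i (Finset.mem_univ i)
  have hcardu : (Finset.univ : Finset (Fin n)).card = n := by simp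
  rw [hyuniv, hcardu, Finset.powerset_univ] at hm
  rw [← Finset.sum_filter_add_sum_filter_not Finset.univ (fun B => B.card ≤ 1)] at hm
  have hzero : ∑ B ∈ (Finset.univ : Finset (Finset (Fin n))).filter (fun B => ¬ B.card ≤ 1),
      (-1 : ℝ) ^ (n - B.card) * (∑ C ∈ B.powerset, y C) = 0 := by
    refine Finset.sum_eq_zero fun B hB => ?_
    rw [Finset.mem_filter] at hB
    rw [key B (by omega), mul_zero]
  rw [hzero, add_zero] at hm
  have hset : (Finset.univ : Finset (Finset (Fin n))).filter (fun B => B.card ≤ 1)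
      = insert ∅ (Finset.univ.image fun j : Fin n => ({j} : Finset (Fin n))) := by
    ext B
    simp only [Finset.mem_filter, Finset.mem_univ, true_and, Finset.mem_insert,
      Finset.mem_image]
    constructor
    · intro h
      rcases Nat.le_one_iff_eq_zero_or_eq_one.mp h with h | h
      · exact Or.inl (Finset.card_eq_zero.mp h)
      · obtain ⟨a, ha⟩ := Finset.card_eq_one.mp h
        exact Or.inr ⟨a, ha.symm⟩
    · rintro (rfl | ⟨a, -, rfl⟩) <;> simp
  rw [hset] at hm
  have hne : (∅ : Finset (Fin n)) ∉ Finset.univ.image fun j : Fin n => ({j} : Finset (Fin n)) := by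
    simp
  rw [Finset.sum_insert hne, Finset.sum_image (fun a _ b _ h => Finset.singleton_injective h)]
    at hm
  have hempty : ∑ C ∈ (∅ : Finset (Fin n)).powerset, y C = y ∅ := by simp
  have hsingle : ∀ j : Fin n, ∑ C ∈ ({j} : Finset (Fin n)).powerset, y C = y ∅ + y {j} := by
    intro j
    have hps : ({j} : Finset (Fin n)).powerset = {∅, {j}} := by
      ext C
      simp [Finset.subset_singleton_iff]
    rw [hps, Finset.sum_insert (by
      intro h
      rw [Finset.mem_singleton] at h
      exact (Finset.singleton_ne_empty j) h.symm), Finset.sum_singleton]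
  have hyj : ∀ j : Fin n, y {j} = x (Function.update (fun i => lastIdx (hp i)) j (k j)) := by
    intro j
    show x (tB {j}) = _
    congr 1
    funext i
    rcases eq_or_ne i j with rfl | hij
    · rw [tBpos {i} i (Finset.mem_singleton_self i), Function.update_self]
    · rw [tBneg {j} i (by simp [hij]), Function.update_of_ne hij]
  have hyempty : y ∅ = x (fun i => lastIdx (hp i)) := by
    have he : tB ∅ = fun i => lastIdx (hp i) :=
      funext fun i => tBneg ∅ i (Finset.notMem_empty i)
    show x (tB ∅) = _
    rw [he]
  simp only [Finset.card_empty, Nat.sub_zero, hempty, Finset.card_singleton, hsingle,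
    hyj, hyempty] at hm
  rw [← hm]
  have hex : ∃ m, n = m + 1 := ⟨n - 1, by omega⟩
  obtain ⟨m, rfl⟩ := hex
  simp only [Nat.add_sub_cancel, pow_succ, mul_add, Finset.sum_add_distrib, Finset.mul_sum,
    Finset.sum_const, Finset.card_univ, Fintype.card_fin, nsmul_eq_mul]
  push_cast
  ring
end
end
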